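/- arXiv:2012.13614 — 2 statements merged into one kernel-verified Lean document; each statement's English description precedes it below -/
import Mathlib

section
/- For every τ ∈ [0,1], every z ∈ ℝ and all δ₀, δ₁ ∈ ℝ, one has ρ_τ(z − δ₁) − ρ_τ(z − δ₀) + (δ₁ − δ₀)(τ − 1{z ≤ 0}) = ∫_{δ₀}^{δ₁} (1{z ≤ t} − 1{z ≤ 0}) dt. -/
open MeasureTheory intervalIntegral Set

lemma knight_indicator_integrable (z a b : ℝ) :
    IntervalIntegrable (fun t => if z ≤ t then (1:ℝ) else 0) volume a b := by
  have h : (fun t => if z ≤ t then (1:ℝ) else 0)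
      = (Set.Ici z).indicator (fun _ => (1:ℝ)) := by
    funext t; simp [Set.indicator_apply, Set.mem_Ici]
  rw [h]
  constructor <;>
    exact (integrable_const (1:ℝ)).indicator measurableSet_Ici

lemma knight_key_le (z a b : ℝ) (hab : a ≤ b) :
    (∫ t in a..b, (if z ≤ t then (1:ℝ) else 0))
      = max (b - z) 0 - max (a - z) 0 := by
  rw [intervalIntegral.integral_of_le hab]
  have h : ∀ t, (if z ≤ t then (1:ℝ) else 0)
      = (Set.Ici z).indicator (fun _ => (1:ℝ)) t := by
    intro t; simp [Set.indicator_apply, Set.mem_Ici]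
  simp_rw [h]
  rw [MeasureTheory.setIntegral_indicator measurableSet_Ici,
    MeasureTheory.setIntegral_const, smul_eq_mul, mul_one]
  rcases le_or_gt z a with hz | hz
  · have hs : Set.Ioc a b ∩ Set.Ici z = Set.Ioc a b := by
      apply Set.inter_eq_self_of_subset_left
      intro t ht
      exact le_trans hz (le_of_lt ht.1)
    rw [hs, Real.volume_real_Ioc, max_eq_left (by linarith : (0:ℝ) ≤ b - a)]
    rw [max_eq_left (by linarith), max_eq_left (by linarith)]
    ring
  · have hs : Set.Ioc a b ∩ Set.Ici z = Set.Icc z b := by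
      ext t
      simp only [Set.mem_inter_iff, Set.mem_Ioc, Set.mem_Icc, Set.mem_Ici]
      constructor
      · rintro ⟨⟨_, h2⟩, h3⟩; exact ⟨h3, h2⟩
      · rintro ⟨h1, h2⟩; exact ⟨⟨lt_of_lt_of_le hz h1, h2⟩, h1⟩
    rw [hs, Real.volume_real_Icc]
    have hz0 : max (a - z) 0 = 0 := max_eq_right (by linarith)
    rw [hz0]
    ring

lemma knight_key (z a b : ℝ) :
    (∫ t in a..b, (if z ≤ t then (1:ℝ) else 0))
      = max (b - z) 0 - max (a - z) 0 := by
  rcases le_total a b with h | h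
  · exact knight_key_le z a b h
  · rw [intervalIntegral.integral_symm, knight_key_le z b a h]
    ring

set_option maxHeartbeats 1000000 in
theorem knight_identity (τ : ℝ) (hτ : τ ∈ Set.Icc (0:ℝ) 1) (z δ₀ δ₁ : ℝ) :
    (τ - if z - δ₁ < 0 then (1:ℝ) else 0) * (z - δ₁)
      - (τ - if z - δ₀ < 0 then (1:ℝ) else 0) * (z - δ₀)
      + (δ₁ - δ₀) * (τ - if z ≤ 0 then (1:ℝ) else 0)
      = ∫ t in δ₀..δ₁,
          ((if z ≤ t then (1:ℝ) else 0) - if z ≤ 0 then (1:ℝ) else 0) := by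
  rw [intervalIntegral.integral_sub (knight_indicator_integrable z δ₀ δ₁)
    intervalIntegrable_const, intervalIntegral.integral_const, knight_key,
    smul_eq_mul]
  rcases le_or_gt z δ₀ with h0 | h0 <;> rcases le_or_gt z δ₁ with h1 | h1 <;>
    simp only [max_def] <;> split_ifs <;> ring_nf <;> linarith
end

section
/- Let Z be a real random variable with a conditional density f with respect to Lebesgue measure satisfying f(y) ≤ M for all y, for some M ≥ 0. Then for all δ₀ ∈ ℝ and δ ∈ ℝ, E[(∫_{δ₀}^{δ₀+δ} (1{Z ≤ t} − 1{Z ≤ 0}) dt)²] ≤ 2M|δ| ∫_0^{|δ|} (|δ₀| + u) du = M|δ|²(2|δ₀| + |δ|). -/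
open MeasureTheory

theorem second_moment_indicator_increment_bound
    {Ω : Type*} [MeasurableSpace Ω] (μ : Measure Ω) [IsProbabilityMeasure μ]
    (Z : Ω → ℝ) (hZ : Measurable Z)
    (f : ℝ → ℝ) (M : ℝ) (hM : 0 ≤ M)
    (hdens : Measure.map Z μ = volume.withDensity (fun y => ENNReal.ofReal (f y)))
    (hbd : ∀ y, f y ≤ M)
    (δ₀ δ : ℝ) :
    (∫ ω, (∫ t in δ₀..(δ₀ + δ),
          ((if Z ω ≤ t then (1:ℝ) else 0) - if Z ω ≤ 0 then (1:ℝ) else 0)) ^ 2 ∂μ)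
        ≤ 2 * M * |δ| * ∫ u in (0:ℝ)..|δ|, (|δ₀| + u) ∧
    2 * M * |δ| * (∫ u in (0:ℝ)..|δ|, (|δ₀| + u)) = M * |δ| ^ 2 * (2 * |δ₀| + |δ|) := by
  have hI : (∫ u in (0:ℝ)..|δ|, (|δ₀| + u)) = |δ₀| * |δ| + |δ| ^ 2 / 2 := by
    rw [intervalIntegral.integral_add intervalIntegrable_const intervalIntegral.intervalIntegrable_id,
      intervalIntegral.integral_const, integral_id]
    simp; ring
  constructor
  · -- main inequality
    set m : ℝ := min (min δ₀ (δ₀ + δ)) 0 with hm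
    set Mx : ℝ := max (max δ₀ (δ₀ + δ)) 0 with hMx
    set S : Set ℝ := Set.Ioc m Mx with hSdef
    have hSm : MeasurableSet S := measurableSet_Ioc
    have hm0 : m ≤ 0 := min_le_right _ _
    have hMx0 : (0:ℝ) ≤ Mx := le_max_right _ _
    -- pointwise bound
    have hpt : ∀ ω, (∫ t in δ₀..(δ₀ + δ),
        ((if Z ω ≤ t then (1:ℝ) else 0) - if Z ω ≤ 0 then (1:ℝ) else 0)) ^ 2
        ≤ S.indicator (fun _ => |δ| ^ 2) (Z ω) := by
      intro ω
      by_cases hz : Z ω ∈ S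
      · rw [Set.indicator_of_mem hz]
        have h1 : ‖∫ t in δ₀..(δ₀ + δ),
            ((if Z ω ≤ t then (1:ℝ) else 0) - if Z ω ≤ 0 then (1:ℝ) else 0)‖
            ≤ 1 * |δ₀ + δ - δ₀| := by
          apply intervalIntegral.norm_integral_le_of_norm_le_const
          intro t _
          rw [Real.norm_eq_abs]
          split_ifs <;> norm_num
        rw [Real.norm_eq_abs] at h1
        have h2 : |∫ t in δ₀..(δ₀ + δ),
            ((if Z ω ≤ t then (1:ℝ) else 0) - if Z ω ≤ 0 then (1:ℝ) else 0)| ≤ |δ| := by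
          simpa using h1
        calc (∫ t in δ₀..(δ₀ + δ),
              ((if Z ω ≤ t then (1:ℝ) else 0) - if Z ω ≤ 0 then (1:ℝ) else 0)) ^ 2
            = |∫ t in δ₀..(δ₀ + δ),
              ((if Z ω ≤ t then (1:ℝ) else 0) - if Z ω ≤ 0 then (1:ℝ) else 0)| ^ 2 :=
              (sq_abs _).symm
          _ ≤ |δ| ^ 2 := by nlinarith [abs_nonneg (∫ t in δ₀..(δ₀ + δ),
              ((if Z ω ≤ t then (1:ℝ) else 0) - if Z ω ≤ 0 then (1:ℝ) else 0))]
      · rw [Set.indicator_of_notMem hz]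
        have hz' : Z ω ≤ m ∨ Mx < Z ω := by
          by_contra h
          push_neg at h
          exact hz ⟨h.1, h.2⟩
        have hzero : (∫ t in δ₀..(δ₀ + δ),
            ((if Z ω ≤ t then (1:ℝ) else 0) - if Z ω ≤ 0 then (1:ℝ) else 0)) = 0 := by
          rw [intervalIntegral.integral_congr (g := fun _ => (0:ℝ)) ?_]
          · simp
          · intro t ht
            dsimp only
            have ht1 : min δ₀ (δ₀ + δ) ≤ t := by
              rcases Set.mem_uIcc.mp ht with ⟨h1, _⟩ | ⟨h1, _⟩
              · exact le_trans (min_le_left _ _) h1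
              · exact le_trans (min_le_right _ _) h1
            have ht2 : t ≤ max δ₀ (δ₀ + δ) := by
              rcases Set.mem_uIcc.mp ht with ⟨_, h2⟩ | ⟨_, h2⟩
              · exact le_trans h2 (le_max_right _ _)
              · exact le_trans h2 (le_max_left _ _)
            have hma : m ≤ min δ₀ (δ₀ + δ) := min_le_left _ _
            have hbM : max δ₀ (δ₀ + δ) ≤ Mx := le_max_left _ _
            rcases le_or_gt (Z ω) 0 with hzz | hzz
            · have hzm : Z ω ≤ m := by
                rcases hz' with h | h
                · exact h
                · linarith
              rw [if_pos (by linarith : Z ω ≤ t), if_pos hzz]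
              ring
            · have hzM : Mx < Z ω := by
                rcases hz' with h | h
                · linarith
                · exact h
              rw [if_neg (by push_neg; linarith : ¬ Z ω ≤ t),
                if_neg (by push_neg; linarith : ¬ Z ω ≤ 0)]
              ring
        rw [hzero]
        norm_num
    -- integrate the bound
    have hmeasg : Measurable (S.indicator (fun _ : ℝ => |δ| ^ 2)) :=
      measurable_const.indicator hSm
    have hprob : IsProbabilityMeasure (μ.map Z) := Measure.isProbabilityMeasure_map hZ.aemeasurable
    have hint_map : Integrable (S.indicator (fun _ : ℝ => |δ| ^ 2)) (μ.map Z) :=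
      (integrable_const _).indicator hSm
    have hint : Integrable (fun ω => S.indicator (fun _ : ℝ => |δ| ^ 2) (Z ω)) μ :=
      (integrable_map_measure hmeasg.aestronglyMeasurable hZ.aemeasurable).mp hint_map
    have hstep1 : (∫ ω, (∫ t in δ₀..(δ₀ + δ),
          ((if Z ω ≤ t then (1:ℝ) else 0) - if Z ω ≤ 0 then (1:ℝ) else 0)) ^ 2 ∂μ)
        ≤ ∫ ω, S.indicator (fun _ : ℝ => |δ| ^ 2) (Z ω) ∂μ := by
      apply integral_mono_of_nonneg
      · exact Filter.Eventually.of_forall fun ω => sq_nonneg _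
      · exact hint
      · exact Filter.Eventually.of_forall hpt
    have hstep2 : (∫ ω, S.indicator (fun _ : ℝ => |δ| ^ 2) (Z ω) ∂μ)
        = ((μ.map Z) S).toReal * |δ| ^ 2 := by
      rw [← integral_map hZ.aemeasurable hmeasg.aestronglyMeasurable,
        integral_indicator_const _ hSm, smul_eq_mul]
      rfl
    have hmapS : (μ.map Z) S ≤ ENNReal.ofReal (M * (Mx - m)) := by
      rw [hdens, withDensity_apply _ hSm]
      calc (∫⁻ z in S, ENNReal.ofReal (f z)) ≤ ∫⁻ _ in S, ENNReal.ofReal M :=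
            lintegral_mono fun z => ENNReal.ofReal_le_ofReal (hbd z)
        _ = ENNReal.ofReal M * volume S := setLIntegral_const _ _
        _ = ENNReal.ofReal M * ENNReal.ofReal (Mx - m) := by rw [hSdef, Real.volume_Ioc]
        _ = ENNReal.ofReal (M * (Mx - m)) := (ENNReal.ofReal_mul hM).symm
    have htoReal : ((μ.map Z) S).toReal ≤ M * (Mx - m) :=
      ENNReal.toReal_le_of_le_ofReal (mul_nonneg hM (by linarith)) hmapS
    have hMxm : Mx - m ≤ |δ₀| + |δ| := by
      have h1 := le_abs_self δ₀
      have h2 := neg_abs_le δ₀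
      have h3 := le_abs_self δ
      have h4 := neg_abs_le δ
      rcases le_total δ₀ (δ₀ + δ) with h | h <;>
        rcases le_total δ₀ 0 with h5 | h5 <;>
        rcases le_total (δ₀ + δ) 0 with h6 | h6 <;>
        simp only [hm, hMx, min_def, max_def] <;>
        split_ifs <;> linarith
    have habs0 := abs_nonneg δ₀
    have habsd := abs_nonneg δ
    calc (∫ ω, (∫ t in δ₀..(δ₀ + δ),
          ((if Z ω ≤ t then (1:ℝ) else 0) - if Z ω ≤ 0 then (1:ℝ) else 0)) ^ 2 ∂μ)
        ≤ ((μ.map Z) S).toReal * |δ| ^ 2 := hstep2 ▸ hstep1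
      _ ≤ (M * (Mx - m)) * |δ| ^ 2 := by nlinarith [sq_nonneg |δ|]
      _ ≤ 2 * M * |δ| * (|δ₀| * |δ| + |δ| ^ 2 / 2) := by
          nlinarith [mul_le_mul_of_nonneg_left hMxm (mul_nonneg hM (sq_nonneg |δ|)),
            mul_nonneg (mul_nonneg hM (sq_nonneg |δ|)) habs0]
      _ = 2 * M * |δ| * ∫ u in (0:ℝ)..|δ|, (|δ₀| + u) := by rw [hI]
  · rw [hI]; ring
end
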